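/- Every formal concept of the projected database π_A(Db) arises as (X ∩ A, Y) for some concept (X,Y) of Db that is the least element of its A-equivalence class (the ⊆ direction of the projection theorem). -/

import Mathlib

variable {α β : Type*} [DecidableEq α] [DecidableEq β]

/-- `(X, Y)` is a 1-rectangle of the database with relation `Db`,
attribute set `AA` and object set `OO`: every attribute of `X` is in
relation with every object of `Y`. -/
def IsRect (Db : α → β → Prop) (AA : Finset α) (OO : Finset β)
    (X : Finset α) (Y : Finset β) : Prop :=
  X ⊆ AA ∧ Y ⊆ OO ∧ ∀ a ∈ X, ∀ o ∈ Y, Db a o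

/-- A formal concept is a 1-rectangle that is maximal for componentwise
inclusion of bi-sets. -/
def IsConcept (Db : α → β → Prop) (AA : Finset α) (OO : Finset β)
    (X : Finset α) (Y : Finset β) : Prop :=
  IsRect Db AA OO X Y ∧
    ∀ X' Y', IsRect Db AA OO X' Y' → X ⊆ X' → Y ⊆ Y' → X = X' ∧ Y = Y'

/-! The minimum of the `A`-class of a projected concept `(X₀, Y₀)` is `(Y₀', Y₀)`, where
`Y₀' = commonAttrs Db AA Y₀` collects all attributes of `Db` shared by the objects of `Y₀`.
It is a concept of `Db` because `(X₀, Y₀)` is maximal in `π_A(Db)`; and any concept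
`(X', Y')` with `X' ∩ A = X₀` has `Y' ⊆ Y₀`, again by maximality of `(X₀, Y₀)`,
hence `Y₀' ⊆ Y'' = X'`. -/

open Classical in
noncomputable def commonAttrs (Db : α → β → Prop) (AA : Finset α) (Y : Finset β) :
    Finset α :=
  AA.filter fun a => ∀ o ∈ Y, Db a o

omit [DecidableEq α] [DecidableEq β] in
theorem mem_commonAttrs {Db : α → β → Prop} {AA : Finset α} {Y : Finset β} {a : α} :
    a ∈ commonAttrs Db AA Y ↔ a ∈ AA ∧ ∀ o ∈ Y, Db a o := by
  simp [commonAttrs]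

namespace IsRect

variable {Db : α → β → Prop} {AA A : Finset α} {OO O : Finset β}
  {X X' : Finset α} {Y Y' : Finset β}

omit [DecidableEq α] [DecidableEq β] in
theorem of_subset (h : IsRect Db AA OO X Y) (hX : X' ⊆ X) (hY : Y' ⊆ Y) (hXA : X' ⊆ A)
    (hYO : Y' ⊆ O) : IsRect Db A O X' Y' :=
  ⟨hXA, hYO, fun a ha o ho => h.2.2 a (hX ha) o (hY ho)⟩

omit [DecidableEq β] in
theorem union_left (h : IsRect Db AA OO X Y) (h' : IsRect Db AA OO X' Y) :
    IsRect Db AA OO (X ∪ X') Y := by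
  refine ⟨Finset.union_subset h.1 h'.1, h.2.1, fun a ha o ho => ?_⟩
  rcases Finset.mem_union.1 ha with ha | ha
  exacts [h.2.2 a ha o ho, h'.2.2 a ha o ho]

omit [DecidableEq α] in
theorem union_right (h : IsRect Db AA OO X Y) (h' : IsRect Db AA OO X Y') :
    IsRect Db AA OO X (Y ∪ Y') := by
  refine ⟨h.1, Finset.union_subset h.2.1 h'.2.1, fun a ha o ho => ?_⟩
  rcases Finset.mem_union.1 ho with ho | ho
  exacts [h.2.2 a ha o ho, h'.2.2 a ha o ho]

omit [DecidableEq α] [DecidableEq β] in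
theorem subset_commonAttrs (h : IsRect Db AA OO X Y) : X ⊆ commonAttrs Db AA Y :=
  fun a ha => mem_commonAttrs.2 ⟨h.1 ha, h.2.2 a ha⟩

end IsRect

omit [DecidableEq α] [DecidableEq β] in
theorem isRect_commonAttrs {Db : α → β → Prop} {AA : Finset α} {OO : Finset β}
    {Y : Finset β}
    (hY : Y ⊆ OO) : IsRect Db AA OO (commonAttrs Db AA Y) Y :=
  ⟨fun _ ha => (mem_commonAttrs.1 ha).1, hY, fun _ ha => (mem_commonAttrs.1 ha).2⟩

theorem isConcept_iff {Db : α → β → Prop} {AA : Finset α} {OO : Finset β} {X : Finset α}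
    {Y : Finset β} :
    IsConcept Db AA OO X Y ↔ IsRect Db AA OO X Y ∧
      (∀ X', IsRect Db AA OO X' Y → X' ⊆ X) ∧
      (∀ Y', IsRect Db AA OO X Y' → Y' ⊆ Y) := by
  constructor
  · rintro ⟨hr, hmax⟩
    refine ⟨hr, fun X' h' => ?_, fun Y' h' => ?_⟩
    · rw [(hmax _ _ (hr.union_left h') Finset.subset_union_left subset_rfl).1]
      exact Finset.subset_union_right
    · rw [(hmax _ _ (hr.union_right h') subset_rfl Finset.subset_union_left).2]
      exact Finset.subset_union_right
  · rintro ⟨hr, hX, hY⟩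
    refine ⟨hr, fun X' Y' h' hXX' hYY' => ⟨?_, ?_⟩⟩
    · exact hXX'.antisymm (hX X' (h'.of_subset subset_rfl hYY' h'.1 hr.2.1))
    · exact hYY'.antisymm (hY Y' (h'.of_subset hXX' subset_rfl hr.1 h'.2.1))

/-- Every concept of the projected database arises as `(X ∩ A, Y)` for some
concept `(X,Y)` of `Db` that is the least element of its `A`-equivalence
class. -/
theorem projection_subset (Db : α → β → Prop) (AA : Finset α) (OO : Finset β)
    (A : Finset α) (hA : A ⊆ AA) (X₀ : Finset α) (Y₀ : Finset β)
    (h : IsConcept Db A OO X₀ Y₀) :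
    ∃ X Y, IsConcept Db AA OO X Y ∧
      (∀ X' Y', IsConcept Db AA OO X' Y' → X' ∩ A = X ∩ A → X ⊆ X' ∧ Y' ⊆ Y) ∧
      X₀ = X ∩ A ∧ Y₀ = Y := by
  obtain ⟨hr₀, hX₀max, hY₀max⟩ := isConcept_iff.1 h
  set X := commonAttrs Db AA Y₀
  have hr : IsRect Db AA OO X Y₀ := isRect_commonAttrs hr₀.2.1
  have hX₀ : X₀ = X ∩ A := by
    refine subset_antisymm (Finset.subset_inter ?_ hr₀.1) (hX₀max _ ?_)
    · exact (hr₀.of_subset subset_rfl subset_rfl (hr₀.1.trans hA) hr₀.2.1).subset_commonAttrs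
    · exact hr.of_subset Finset.inter_subset_left subset_rfl Finset.inter_subset_right hr₀.2.1
  have hX₀X : X₀ ⊆ X := hX₀ ▸ Finset.inter_subset_left
  refine ⟨X, Y₀, isConcept_iff.2 ⟨hr, fun X' h' => h'.subset_commonAttrs, fun Y' h' => ?_⟩,
    fun X' Y' h' hX' => ?_, hX₀, rfl⟩
  · exact hY₀max Y' (h'.of_subset hX₀X subset_rfl hr₀.1 h'.2.1)
  obtain ⟨hr', hX'max, -⟩ := isConcept_iff.1 h'
  have hX₀X' : X₀ ⊆ X' := hX₀.trans hX'.symm ▸ Finset.inter_subset_left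
  have hY' : Y' ⊆ Y₀ := hY₀max Y' (hr'.of_subset hX₀X' subset_rfl hr₀.1 hr'.2.1)
  exact ⟨hX'max X (hr.of_subset subset_rfl hY' hr.1 hr'.2.1), hY'⟩
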